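/- Let k be an algebraically closed field of characteristic zero and A ∈ k[[z]] of order n ≥ 2. The set G_A = {φ of order 1 : A ∘ φ = A} is a cyclic group of order n under composition. -/

import Mathlib

open PowerSeries

/-- Composition (substitution) `comp A B = A ∘ B` of formal power series,
the standard coefficient formula, well-behaved when `B` has zero constant term. -/
noncomputable def comp {k : Type*} [Field k] (A B : PowerSeries k) : PowerSeries k :=
  PowerSeries.mk fun n =>
    ∑ i ∈ Finset.range (n + 1), (PowerSeries.coeff i A) * (PowerSeries.coeff n (B ^ i))

/-- `iterComp φ j` is the `j`-fold compositional iterate `φ^{∘j}` (with `φ^{∘0} = z`). -/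
noncomputable def iterComp {k : Type*} [Field k] (φ : PowerSeries k) : ℕ → PowerSeries k
  | 0 => PowerSeries.X
  | n + 1 => comp φ (iterComp φ n)

/-- Composition of a list of power series: `compList [A₁, …, A_r] = A₁ ∘ ⋯ ∘ A_r`. -/
noncomputable def compList {k : Type*} [Field k] : List (PowerSeries k) → PowerSeries k
  | [] => PowerSeries.X
  | a :: t => comp a (compList t)

/-! The linear coefficient `φ ↦ φ'(0)` maps `G_A` bijectively onto the `n`-th roots of unity.
Comparing coefficients of `z ^ n` in `A ∘ φ = A` gives `φ'(0) ^ n = 1`. If `φ` and `φ'` agree below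
degree `d ≥ 2`, then `A ∘ φ` and `A ∘ φ'` agree below degree `d + n - 1` and differ there by
`n a_n φ'(0) ^ (n - 1) (φ_d - φ'_d)`. As `n a_n ≠ 0`, an element of `G_A` is determined by `φ'(0)`,
and for every `n`-th root of unity `ζ` one can solve for the coefficients of an element with
`φ'(0) = ζ` one at a time. Since `φ'(0)` is multiplicative under composition, the iterates of the
element attached to a primitive root exhaust `G_A`. -/

section PowerSeriesLemmas

variable {R : Type*} [CommRing R]

theorem PowerSeries.coeff_add_mul_of_X_pow_dvd {F G : R⟦X⟧} {a b : ℕ}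
    (hF : X ^ a ∣ F) (hG : X ^ b ∣ G) :
    coeff (a + b) (F * G) = coeff a F * coeff b G := by
  obtain ⟨F, rfl⟩ := hF
  obtain ⟨G, rfl⟩ := hG
  rw [mul_mul_mul_comm, ← pow_add, add_comm a b]
  simp only [coeff_X_pow_mul', le_refl, ite_true, Nat.sub_self, coeff_zero_eq_constantCoeff,
    map_mul]

theorem PowerSeries.coeff_pow_of_X_dvd {B : R⟦X⟧} (hB : X ∣ B) (i : ℕ) :
    coeff i (B ^ i) = coeff 1 B ^ i := by
  induction i with
  | zero => simp
  | succ i ih =>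
    rw [pow_succ', pow_succ', add_comm, coeff_add_mul_of_X_pow_dvd (a := 1) (by rwa [pow_one])
      (pow_dvd_pow_of_dvd hB i), ih]

theorem pow_succ_succ_sub_pow_succ_succ (B B' : R) (m : ℕ) :
    B ^ (m + 2) - B' ^ (m + 2) = B * (B ^ (m + 1) - B' ^ (m + 1)) + (B - B') * B' ^ (m + 1) := by
  ring

theorem PowerSeries.X_pow_dvd_pow_sub_pow {B B' : R⟦X⟧} (hB : X ∣ B) (hB' : X ∣ B') {d : ℕ}
    (h : X ^ d ∣ B - B') (m : ℕ) : X ^ (d + m) ∣ B ^ (m + 1) - B' ^ (m + 1) := by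
  induction m with
  | zero => simpa using h
  | succ m ih =>
    rw [pow_succ_succ_sub_pow_succ_succ]
    refine dvd_add ?_ ?_
    · rw [← add_assoc, pow_succ']
      exact mul_dvd_mul hB ih
    · rw [pow_add]
      exact mul_dvd_mul h (pow_dvd_pow_of_dvd hB' _)

theorem PowerSeries.coeff_pow_sub_pow {B B' : R⟦X⟧} (hB : X ∣ B) (hB' : X ∣ B') {d : ℕ}
    (hd : 2 ≤ d) (h : X ^ d ∣ B - B') (m : ℕ) :
    coeff (d + m) (B ^ (m + 1) - B' ^ (m + 1)) = (m + 1) * coeff 1 B ^ m * coeff d (B - B') := by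
  have h1 : coeff 1 B' = coeff 1 B :=
    (sub_eq_zero.mp (by rw [← map_sub]; exact X_pow_dvd_iff.mp h 1 hd)).symm
  induction m with
  | zero => simp
  | succ m ih =>
    rw [pow_succ_succ_sub_pow_succ_succ, map_add, show d + (m + 1) = 1 + (d + m) by ring,
      coeff_add_mul_of_X_pow_dvd (a := 1) (by rwa [pow_one]) (X_pow_dvd_pow_sub_pow hB hB' h m), ih,
      show 1 + (d + m) = d + (m + 1) by ring,
      coeff_add_mul_of_X_pow_dvd h (pow_dvd_pow_of_dvd hB' _), coeff_pow_of_X_dvd hB', h1]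
    push_cast
    ring

theorem PowerSeries.order_eq_one_iff {φ : R⟦X⟧} : φ.order = 1 ↔ X ∣ φ ∧ coeff 1 φ ≠ 0 := by
  rw [← Nat.cast_one, order_eq_nat, X_pow_dvd_iff.symm.trans (by rw [pow_one]), and_comm]

theorem PowerSeries.X_pow_dvd_of_order_eq {A : R⟦X⟧} {n : ℕ} (hA : A.order = n) : X ^ n ∣ A :=
  X_pow_dvd_iff.mpr (order_eq_nat.mp hA).2

end PowerSeriesLemmas

section Composition

variable {k : Type*} [Field k]

theorem coeff_comp (A B : k⟦X⟧) (m : ℕ) :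
    coeff m (comp A B) = ∑ i ∈ Finset.range (m + 1), coeff i A * coeff m (B ^ i) :=
  coeff_mk _ _

theorem comp_eq_subst (A : k⟦X⟧) {B : k⟦X⟧} (hB : X ∣ B) : comp A B = A.subst B := by
  ext m
  rw [coeff_comp, coeff_subst' (HasSubst.of_constantCoeff_zero' (X_dvd_iff.mp hB)),
    finsum_eq_sum_of_support_subset _ (s := Finset.range (m + 1)) fun i hi => ?_]
  · simp only [smul_eq_mul]
  · rw [Finset.coe_range, Set.mem_Iio]
    by_contra! hmi
    exact hi (by simp only [X_pow_dvd_iff.mp (pow_dvd_pow_of_dvd hB i) m (by omega), smul_zero])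

theorem coeff_zero_comp (A B : k⟦X⟧) : coeff 0 (comp A B) = coeff 0 A := by
  simp [coeff_comp]

theorem coeff_one_comp (A B : k⟦X⟧) : coeff 1 (comp A B) = coeff 1 A * coeff 1 B := by
  simp [coeff_comp, Finset.sum_range_succ, coeff_one]

theorem X_dvd_comp {B C : k⟦X⟧} (hB : X ∣ B) : X ∣ comp B C := by
  rw [X_dvd_iff, ← coeff_zero_eq_constantCoeff_apply, coeff_zero_comp]
  simpa using X_dvd_iff.mp hB

theorem comp_X (A : k⟦X⟧) : comp A X = A := by
  rw [comp_eq_subst A dvd_rfl, X_subst]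

theorem comp_assoc (A : k⟦X⟧) {B C : k⟦X⟧} (hB : X ∣ B) (hC : X ∣ C) :
    comp (comp A B) C = comp A (comp B C) := by
  rw [comp_eq_subst _ (X_dvd_comp hB), comp_eq_subst _ hB, comp_eq_subst _ hC, comp_eq_subst _ hC,
    subst_comp_subst_apply (HasSubst.of_constantCoeff_zero' (X_dvd_iff.mp hB))
      (HasSubst.of_constantCoeff_zero' (X_dvd_iff.mp hC))]

theorem X_pow_dvd_comp {A B : k⟦X⟧} {n : ℕ} (hA : X ^ n ∣ A) : X ^ n ∣ comp A B := by
  refine X_pow_dvd_iff.mpr fun m hm => (coeff_comp A B m).trans (Finset.sum_eq_zero fun i hi => ?_)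
  rw [X_pow_dvd_iff.mp hA i (by rw [Finset.mem_range] at hi; omega), zero_mul]

theorem coeff_comp_of_X_pow_dvd {A B : k⟦X⟧} {n : ℕ} (hA : X ^ n ∣ A) (hB : X ∣ B) :
    coeff n (comp A B) = coeff n A * coeff 1 B ^ n := by
  rw [coeff_comp, Finset.sum_eq_single_of_mem n (Finset.self_mem_range_succ n),
    coeff_pow_of_X_dvd hB]
  intro i hi hin
  rw [X_pow_dvd_iff.mp hA i (by rw [Finset.mem_range] at hi; omega), zero_mul]

theorem coeff_comp_sub_coeff_comp {A B B' : k⟦X⟧} {d e : ℕ} (hA : X ^ (e + 1) ∣ A) (hB : X ∣ B)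
    (hB' : X ∣ B') (hd : 2 ≤ d) (h : X ^ d ∣ B - B') :
    coeff (d + e) (comp A B) - coeff (d + e) (comp A B') =
      (e + 1) * coeff (e + 1) A * coeff 1 B ^ e * coeff d (B - B') := by
  rw [coeff_comp, coeff_comp, ← Finset.sum_sub_distrib,
    Finset.sum_eq_single_of_mem (e + 1) (Finset.mem_range.mpr (by omega))]
  · rw [← mul_sub, ← map_sub, coeff_pow_sub_pow hB hB' hd h]
    ring
  · intro i _ hi
    rw [← mul_sub, ← map_sub]
    rcases lt_or_gt_of_ne hi with hlt | hgt
    · rw [X_pow_dvd_iff.mp hA i hlt, zero_mul]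
    · obtain ⟨m, rfl⟩ : ∃ m, i = m + 1 := ⟨i - 1, by omega⟩
      rw [X_pow_dvd_iff.mp (X_pow_dvd_pow_sub_pow hB hB' h m) _ (by omega), mul_zero]

theorem X_dvd_iterComp {ψ : k⟦X⟧} (hψ : X ∣ ψ) : ∀ j, X ∣ iterComp ψ j
  | 0 => dvd_rfl
  | _ + 1 => X_dvd_comp hψ

theorem coeff_one_iterComp (ψ : k⟦X⟧) : ∀ j, coeff 1 (iterComp ψ j) = coeff 1 ψ ^ j
  | 0 => by simp [iterComp]
  | j + 1 => by rw [iterComp, coeff_one_comp, coeff_one_iterComp ψ j, pow_succ']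

theorem comp_iterComp {A ψ : k⟦X⟧} (hψ : X ∣ ψ) (h : comp A ψ = A) :
    ∀ j, comp A (iterComp ψ j) = A
  | 0 => comp_X A
  | j + 1 => by rw [iterComp, ← comp_assoc A hψ (X_dvd_iterComp hψ j), h, comp_iterComp hψ h j]

end Composition

section TransitionGroup

variable {k : Type*} [Field k]

def transitionGroup (A : k⟦X⟧) : Set k⟦X⟧ := {φ | φ.order = 1 ∧ comp A φ = A}

theorem coeff_one_pow_eq_one {A φ : k⟦X⟧} {n : ℕ} (hA : A.order = n)
    (hφ : φ ∈ transitionGroup A) : coeff 1 φ ^ n = 1 := by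
  have h := congrArg (coeff n) hφ.2
  rw [coeff_comp_of_X_pow_dvd (X_pow_dvd_of_order_eq hA) (order_eq_one_iff.mp hφ.1).1] at h
  exact mul_left_cancel₀ (order_eq_nat.mp hA).1 (h.trans (mul_one _).symm)

theorem eq_of_coeff_one_eq {A φ φ' : k⟦X⟧} {n : ℕ} (hA : A.order = n) (hn : (n : k) ≠ 0)
    (hφ : φ ∈ transitionGroup A) (hφ' : φ' ∈ transitionGroup A) (h1 : coeff 1 φ = coeff 1 φ') :
    φ = φ' := by
  obtain ⟨e, rfl⟩ : ∃ e, n = e + 1 := Nat.exists_eq_succ_of_ne_zero (by rintro rfl; simp at hn)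
  obtain ⟨⟨hX, hc⟩, hcomp⟩ := And.imp_left order_eq_one_iff.mp hφ
  obtain ⟨⟨hX', -⟩, hcomp'⟩ := And.imp_left order_eq_one_iff.mp hφ'
  suffices h : ∀ d, 2 ≤ d → X ^ d ∣ φ - φ' by
    ext m
    rw [← sub_eq_zero, ← map_sub]
    exact X_pow_dvd_iff.mp (h (m + 2) (by omega)) m (by omega)
  intro d hd
  induction d, hd using Nat.le_induction with
  | base =>
    refine X_pow_dvd_iff.mpr fun m hm => ?_
    interval_cases m
    · rw [coeff_zero_eq_constantCoeff_apply, ← X_dvd_iff]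
      exact dvd_sub hX hX'
    · rw [map_sub, h1, sub_self]
  | succ d hd ih =>
    have hvar := coeff_comp_sub_coeff_comp (X_pow_dvd_of_order_eq hA) hX hX' hd ih
    rw [hcomp, hcomp', sub_self, eq_comm] at hvar
    have hd0 : coeff d (φ - φ') = 0 :=
      (mul_eq_zero.mp hvar).resolve_left <| mul_ne_zero (mul_ne_zero (by exact_mod_cast hn)
        (order_eq_nat.mp hA).1) (pow_ne_zero _ hc)
    refine X_pow_dvd_iff.mpr fun m hm => ?_
    rcases Nat.lt_succ_iff_lt_or_eq.mp hm with hm | rfl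
    · exact X_pow_dvd_iff.mp ih m hm
    · exact hd0

/-- By `coeff_comp_sub_coeff_comp`, this choice of the coefficient of `z ^ (d + 2)` makes the
coefficient of `z ^ (d + 2 + (n - 1))` in `A ∘ φ` equal to that of `A`. -/
noncomputable def transitionCoeff (A : k⟦X⟧) (n : ℕ) (ζ : k) : ℕ → k
  | 0 => 0
  | 1 => ζ
  | d + 2 =>
    (coeff (d + 2 + (n - 1)) A - coeff (d + 2 + (n - 1))
        (comp A (mk fun j => if _ : j < d + 2 then transitionCoeff A n ζ j else 0)))
      / (n * coeff n A * ζ ^ (n - 1))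

noncomputable def transition (A : k⟦X⟧) (n : ℕ) (ζ : k) : k⟦X⟧ := mk (transitionCoeff A n ζ)

theorem X_dvd_transition (A : k⟦X⟧) (n : ℕ) (ζ : k) : X ∣ transition A n ζ :=
  X_dvd_iff.mpr (by simp [transition, transitionCoeff])

theorem coeff_one_transition (A : k⟦X⟧) (n : ℕ) (ζ : k) : coeff 1 (transition A n ζ) = ζ := by
  simp [transition, transitionCoeff]

theorem comp_transition {A : k⟦X⟧} {n : ℕ} (hA : A.order = n) (hn : (n : k) ≠ 0) {ζ : k}
    (hζ : ζ ^ n = 1) : comp A (transition A n ζ) = A := by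
  obtain ⟨e, rfl⟩ : ∃ e, n = e + 1 := Nat.exists_eq_succ_of_ne_zero (by rintro rfl; simp at hn)
  have hXA := X_pow_dvd_of_order_eq hA
  set φ := transition A (e + 1) ζ
  have hXφ : X ∣ φ := X_dvd_transition A (e + 1) ζ
  ext m
  rcases lt_trichotomy m (e + 1) with hm | rfl | hm
  · rw [X_pow_dvd_iff.mp hXA m hm, X_pow_dvd_iff.mp (X_pow_dvd_comp hXA) m hm]
  · rw [coeff_comp_of_X_pow_dvd hXA hXφ, coeff_one_transition, hζ, mul_one]
  · obtain ⟨d, rfl⟩ : ∃ d, m = d + 2 + e := ⟨m - e - 2, by omega⟩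
    set φ₀ : k⟦X⟧ := mk fun j => if _ : j < d + 2 then transitionCoeff A (e + 1) ζ j else 0
    have hXφ₀ : X ∣ φ₀ := X_dvd_iff.mpr (by simp [φ₀, transitionCoeff])
    have hdvd : X ^ (d + 2) ∣ φ - φ₀ :=
      X_pow_dvd_iff.mpr fun j hj => by simp [φ, φ₀, transition, hj]
    have hvar := coeff_comp_sub_coeff_comp hXA hXφ hXφ₀ (by omega) hdvd
    have hζ0 : ζ ≠ 0 := by rintro rfl; simp at hζ
    have hcoeff : coeff (d + 2) (φ - φ₀) = (coeff (d + 2 + e) A - coeff (d + 2 + e) (comp A φ₀)) /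
        ((e + 1) * coeff (e + 1) A * ζ ^ e) := by
      simp [φ, φ₀, transition, transitionCoeff]
    rw [hcoeff, coeff_one_transition, mul_div_cancel₀ _ (mul_ne_zero (mul_ne_zero
      (by exact_mod_cast hn) (order_eq_nat.mp hA).1) (pow_ne_zero _ hζ0))] at hvar
    linear_combination hvar

theorem transition_mem_transitionGroup {A : k⟦X⟧} {n : ℕ} (hA : A.order = n) (hn : (n : k) ≠ 0)
    {ζ : k} (hζ : ζ ^ n = 1) : transition A n ζ ∈ transitionGroup A := by
  refine ⟨order_eq_one_iff.mpr ⟨X_dvd_transition A n ζ, ?_⟩, comp_transition hA hn hζ⟩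
  rw [coeff_one_transition]
  rintro rfl
  exact one_ne_zero (hζ.symm.trans (zero_pow (by rintro rfl; simp at hn)))

theorem iterComp_mem_transitionGroup {A ψ : k⟦X⟧} (hψ : ψ ∈ transitionGroup A) (j : ℕ) :
    iterComp ψ j ∈ transitionGroup A := by
  obtain ⟨⟨hX, hc⟩, hcomp⟩ := And.imp_left order_eq_one_iff.mp hψ
  refine ⟨order_eq_one_iff.mpr ⟨X_dvd_iterComp hX j, ?_⟩, comp_iterComp hX hcomp j⟩
  rw [coeff_one_iterComp]
  exact pow_ne_zero j hc

theorem bijOn_coeff_one_transitionGroup {A : k⟦X⟧} {n : ℕ} (hA : A.order = n) (hn : (n : k) ≠ 0) :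
    Set.BijOn (coeff 1) (transitionGroup A) (Polynomial.nthRootsFinset n (1 : k)) := by
  have hn0 : 0 < n := Nat.pos_of_ne_zero (by rintro rfl; simp at hn)
  refine ⟨fun φ hφ => ?_, fun φ hφ φ' hφ' h => eq_of_coeff_one_eq hA hn hφ hφ' h, fun ζ hζ => ?_⟩
  · exact (Polynomial.mem_nthRootsFinset hn0 1).mpr (coeff_one_pow_eq_one hA hφ)
  · have hζ1 := (Polynomial.mem_nthRootsFinset hn0 1).mp hζ
    exact ⟨_, transition_mem_transitionGroup hA hn hζ1, coeff_one_transition A n ζ⟩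

end TransitionGroup

theorem stmt7 {k : Type*} [Field k] [IsAlgClosed k] [CharZero k]
    {n : ℕ} (hn : 2 ≤ n) (A : PowerSeries k) (hA : A.order = (n : ℕ∞)) :
    Set.ncard {φ : PowerSeries k | φ.order = 1 ∧ comp A φ = A} = n ∧
    ∃ ψ : PowerSeries k, (ψ.order = 1 ∧ comp A ψ = A) ∧
      ∀ φ : PowerSeries k, φ.order = 1 ∧ comp A φ = A → ∃ j : ℕ, φ = iterComp ψ j := by
  have hnk : (n : k) ≠ 0 := Nat.cast_ne_zero.mpr (by omega)
  have : NeZero (n : k) := ⟨hnk⟩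
  have : NeZero n := ⟨by omega⟩
  obtain ⟨ζ, hζ⟩ := HasEnoughRootsOfUnity.exists_primitiveRoot k n
  have hψ := transition_mem_transitionGroup hA hnk hζ.pow_eq_one
  refine ⟨?_, transition A n ζ, hψ, fun φ hφ => ?_⟩
  · rw [← hζ.card_nthRootsFinset, ← Set.ncard_coe_finset]
    exact (bijOn_coeff_one_transitionGroup hA hnk).ncard_eq
  · obtain ⟨j, -, hj⟩ := hζ.eq_pow_of_pow_eq_one (coeff_one_pow_eq_one hA hφ)
    refine ⟨j, eq_of_coeff_one_eq hA hnk hφ (iterComp_mem_transitionGroup hψ j) ?_⟩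
    rw [coeff_one_iterComp, coeff_one_transition, hj]
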